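/- Let 𝒫 be a finite set of stochastic trees and L an LPTS with k states such that P ⪯ L for every P ∈ 𝒫. Then there exists a partition Π of S_𝒫 of size at most 2^k (with all start states in one class) such that 𝒫/Π ⪯ L. -/

import Mathlib

open Finset

/-- A discrete probability distribution on a finite set `S`, with rational values. -/
structure PDist (S : Type) [Fintype S] where
  prob : S → ℚ
  nonneg : ∀ s, 0 ≤ prob s
  sum_one : ∑ s, prob s = 1

/-- The lifting `μ₁ ⊑_R μ₂` of a relation `R` to distributions, via a weight function. -/
def DistLe {S₁ S₂ : Type} [Fintype S₁] [Fintype S₂]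
    (R : S₁ → S₂ → Prop) (μ₁ : PDist S₁) (μ₂ : PDist S₂) : Prop :=
  ∃ w : S₁ → S₂ → ℚ,
    (∀ s₁ s₂, 0 ≤ w s₁ s₂ ∧ w s₁ s₂ ≤ 1) ∧
    (∀ s₁, μ₁.prob s₁ = ∑ s₂, w s₁ s₂) ∧
    (∀ s₂, μ₂.prob s₂ = ∑ s₁, w s₁ s₂) ∧
    (∀ s₁ s₂, 0 < w s₁ s₂ → R s₁ s₂)

/-- A labeled probabilistic transition system over states `S` and actions `A`. -/
structure LPTS (S A : Type) [Fintype S] where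
  start : S
  trans : S → A → PDist S → Prop

/-- `R` is a strong simulation between `L₁` and `L₂`. -/
def IsStrongSim {S₁ S₂ A : Type} [Fintype S₁] [Fintype S₂]
    (L₁ : LPTS S₁ A) (L₂ : LPTS S₂ A) (R : S₁ → S₂ → Prop) : Prop :=
  ∀ s₁ s₂, R s₁ s₂ → ∀ a μ₁, L₁.trans s₁ a μ₁ →
    ∃ μ₂, L₂.trans s₂ a μ₂ ∧ DistLe R μ₁ μ₂

/-- `L₁ ⪯ L₂`: simulation conformance. -/
def Sim {S₁ S₂ A : Type} [Fintype S₁] [Fintype S₂]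
    (L₁ : LPTS S₁ A) (L₂ : LPTS S₂ A) : Prop :=
  ∃ R, IsStrongSim L₁ L₂ R ∧ R L₁.start L₂.start

/-- A stochastic tree: the start state is in the support of no distribution, and every
other state is in the support of exactly one distribution appearing in a transition. -/
def IsTree {S A : Type} [Fintype S] (L : LPTS S A) : Prop :=
  (∀ s a μ, L.trans s a μ → μ.prob L.start = 0) ∧
  (∀ t, t ≠ L.start → ∃! μ : PDist S, (∃ s a, L.trans s a μ) ∧ 0 < μ.prob t)

open scoped Classical

section Partition

variable {ι : Type} [Fintype ι] [Nonempty ι] {St : ι → Type} [∀ i, Fintype (St i)]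
  {A : Type} {E : Type} [Fintype E]

/-- The lifting of a distribution on the states of tree `i` to the equivalence classes of a
partition, given by the class map `c`: `μ̄(e) = ∑_{s ∈ e} μ(s)`. -/
noncomputable def liftDist (c : (Σ i, St i) → E) (i : ι) (μ : PDist (St i)) : E → ℚ :=
  fun e => ∑ s ∈ Finset.univ.filter (fun s => c ⟨i, s⟩ = e), μ.prob s

/-- The quotient LPTS `𝒫/Π` of a family of trees `P` by the partition with class map `c`. -/
noncomputable def quotLPTS (P : ∀ i, LPTS (St i) A) (c : (Σ i, St i) → E) : LPTS E A where
  start := c ⟨Classical.arbitrary ι, (P (Classical.arbitrary ι)).start⟩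
  trans := fun e a ν => ∃ i s μ, (P i).trans s a μ ∧ c ⟨i, s⟩ = e ∧
    ∀ e', ν.prob e' = liftDist c i μ e'

end Partition

/-!
Identify two tree states when they are simulated by the same set of states of `L`; there are at
most `2 ^ k` such sets. A class is simulated by every state of its set: a transition of the
quotient comes from a transition of a single representative, and summing that representative's
weight function over the classes witnesses the lifted distribution relation. The start states
land in one class once every simulation is normalised to relate a root to `L.start` alone,
which is harmless because a root lies in the support of no distribution.
-/

theorem PDist.prob_le_one {S : Type} [Fintype S] (μ : PDist S) (s : S) : μ.prob s ≤ 1 :=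
  μ.sum_one ▸ single_le_sum (fun t _ => μ.nonneg t) (mem_univ s)

section DistLe

variable {S₁ S₂ : Type} [Fintype S₁] [Fintype S₂] {R R' : S₁ → S₂ → Prop}
  {μ₁ : PDist S₁} {μ₂ : PDist S₂}

theorem DistLe.mono_of_support (h : DistLe R μ₁ μ₂)
    (hR : ∀ s t, 0 < μ₁.prob s → R s t → R' s t) : DistLe R' μ₁ μ₂ := by
  obtain ⟨w, hw01, hw₁, hw₂, hwR⟩ := h
  refine ⟨w, hw01, hw₁, hw₂, fun s t hpos => hR s t ?_ (hwR s t hpos)⟩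
  calc 0 < w s t := hpos
    _ ≤ ∑ t', w s t' := single_le_sum (fun t' _ => (hw01 s t').1) (mem_univ t)
    _ = μ₁.prob s := (hw₁ s).symm

theorem DistLe.map {E : Type} [Fintype E] (h : DistLe R μ₁ μ₂) (f : S₁ → E) (ν : PDist E)
    (hν : ∀ e, ν.prob e = ∑ s ∈ univ.filter (fun s => f s = e), μ₁.prob s) :
    DistLe (fun e t => ∃ s, f s = e ∧ R s t) ν μ₂ := by
  obtain ⟨w, hw01, hw₁, hw₂, hwR⟩ := h
  have hfiber_le : ∀ e t, ∑ s ∈ univ.filter (fun s => f s = e), w s t ≤ μ₂.prob t :=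
    fun e t => hw₂ t ▸ sum_le_sum_of_subset_of_nonneg (filter_subset _ _)
      (fun s _ _ => (hw01 s t).1)
  refine ⟨fun e t => ∑ s ∈ univ.filter (fun s => f s = e), w s t, fun e t => ⟨?_, ?_⟩,
    fun e => ?_, fun t => ?_, fun e t hpos => ?_⟩
  · exact sum_nonneg fun s _ => (hw01 s t).1
  · exact (hfiber_le e t).trans (μ₂.prob_le_one t)
  · rw [hν, sum_comm]
    exact sum_congr rfl fun s _ => hw₁ s
  · rw [hw₂, ← sum_fiberwise univ f]
  · obtain ⟨s, hs, hst⟩ := exists_lt_of_sum_lt (f := fun _ => (0 : ℚ)) (by simpa using hpos)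
    exact ⟨s, (mem_filter.mp hs).2, hwR s t hst⟩

end DistLe

section Rooted

variable {S₁ S₂ A : Type} [Fintype S₁] [Fintype S₂] {L₁ : LPTS S₁ A} {L₂ : LPTS S₂ A}

theorem IsStrongSim.restrict_start (hroot : ∀ s a μ, L₁.trans s a μ → μ.prob L₁.start = 0)
    {R : S₁ → S₂ → Prop} (hR : IsStrongSim L₁ L₂ R) (hstart : R L₁.start L₂.start) :
    IsStrongSim L₁ L₂ (fun s t => if s = L₁.start then t = L₂.start else R s t) := by
  intro s t hst a μ hμ
  have hRst : R s t := by
    split_ifs at hst with hs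
    · exact hs ▸ hst ▸ hstart
    · exact hst
  obtain ⟨μ₂, hμ₂, hle⟩ := hR s t hRst a μ hμ
  refine ⟨μ₂, hμ₂, hle.mono_of_support fun s' t' hpos hR' => ?_⟩
  have hs' : s' ≠ L₁.start := by
    rintro rfl
    exact hpos.ne' (hroot s a μ hμ)
  simpa [hs'] using hR'

theorem Sim.exists_rooted (hroot : ∀ s a μ, L₁.trans s a μ → μ.prob L₁.start = 0)
    (h : Sim L₁ L₂) : ∃ R, IsStrongSim L₁ L₂ R ∧ ∀ t, R L₁.start t ↔ t = L₂.start := by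
  obtain ⟨R, hR, hstart⟩ := h
  exact ⟨_, hR.restrict_start hroot hstart, fun t => by simp⟩

end Rooted

theorem isStrongSim_quotLPTS {ι : Type} [Fintype ι] [Nonempty ι] {St : ι → Type}
    [∀ i, Fintype (St i)] {A SL E : Type} [Fintype SL] [Fintype E]
    {P : ∀ i, LPTS (St i) A} {L : LPTS SL A} {R : ∀ i, St i → SL → Prop}
    (hR : ∀ i, IsStrongSim (P i) L (R i)) {c : (Σ i, St i) → E}
    (hc : ∀ x y, c x = c y → ∀ t, R x.1 x.2 t → R y.1 y.2 t) :
    IsStrongSim (quotLPTS P c) L (fun e t => ∃ x, c x = e ∧ R x.1 x.2 t) := by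
  rintro _ t ⟨x, rfl, hxt⟩ a ν ⟨i, s, μ, hμ, hcs, hν⟩
  obtain ⟨μ₂, hμ₂, hle⟩ := hR i s t (hc x ⟨i, s⟩ hcs.symm t hxt) a μ hμ
  refine ⟨μ₂, hμ₂, (hle.map (fun s => c ⟨i, s⟩) ν hν).mono_of_support ?_⟩
  rintro e t' - ⟨s', rfl, hs't'⟩
  exact ⟨⟨i, s'⟩, rfl, hs't'⟩

/-- If `L` has `k` states and simulates every tree in the finite family `P`, then there is
a partition of the combined state space of size at most `2^k` (with all start states in
one class) whose quotient is simulated by `L`. -/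
theorem exists_partition_quotient_sim {ι : Type} [Fintype ι] [Nonempty ι]
    {St : ι → Type} [∀ i, Fintype (St i)] {A SL : Type} [Fintype SL]
    (P : ∀ i, LPTS (St i) A) (htree : ∀ i, IsTree (P i))
    (L : LPTS SL A) (k : ℕ) (hk : Fintype.card SL = k)
    (hsim : ∀ i, Sim (P i) L) :
    ∃ (E : Type) (_ : Fintype E) (c : (Σ i, St i) → E),
      Function.Surjective c ∧
      (∀ i j, c ⟨i, (P i).start⟩ = c ⟨j, (P j).start⟩) ∧
      Fintype.card E ≤ 2 ^ k ∧
      Sim (quotLPTS P c) L := by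
  choose R hR hroot using fun i => (hsim i).exists_rooted (htree i).1
  let image : (Σ i, St i) → Set SL := fun x => {t | R x.1 x.2 t}
  have himage_start : ∀ i, image ⟨i, (P i).start⟩ = {L.start} := fun i => by
    ext t
    exact hroot i t
  refine ⟨Set.range image, inferInstance, Set.rangeFactorization image,
    Set.rangeFactorization_surjective, fun i j => Subtype.ext ?_, ?_, ?_⟩
  · exact (himage_start i).trans (himage_start j).symm
  · calc Fintype.card (Set.range image) ≤ Fintype.card (Set SL) := Fintype.card_subtype_le _
      _ = 2 ^ k := by rw [Fintype.card_set, hk]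
  · refine ⟨_, isStrongSim_quotLPTS hR fun x y hxy t hxt => ?_, _, rfl, (hroot _ _).mpr rfl⟩
    have himage : image x = image y := congrArg Subtype.val hxy
    exact (himage ▸ hxt : t ∈ image y)
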